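/- arXiv:2001.10122 — 4 statements merged into one kernel-verified Lean document; each statement's English description precedes it below -/
import Mathlib

section
/- Fix an integer T ≥ 1. For every sequence u¹ : ℕ → ℝ (agent 1's open-loop controls) and every family u² : (-1,1) → ℕ → ℝ (agent 2's controls, which may depend on the parameter a), one has sup_{a ∈ (-1,1)} Σ_{t=0}^{T-1} [ (x¹_t(a) − x²_t(a))² + (u¹_t − (1/2)·u²(a)_t)² ] ≥ (T−1)/4, where the states are defined by x¹_0(a) = x²_0(a) = 1, x¹_{t+1}(a) = u¹_t, and x²_{t+1}(a) = a·x²_t(a). In particular, the worst-case cumulative cost over the parameter family grows at least linearly in T. -/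
lemma count_odd_range (n : ℕ) :
    ∑ t ∈ Finset.range n, (if Odd t then (1:ℝ) else 0) = ((n / 2 : ℕ) : ℝ) := by
  induction n with
  | zero => simp
  | succ n ih =>
    rw [Finset.sum_range_succ, ih]
    by_cases h : Odd n
    · have h1 : n % 2 = 1 := Nat.odd_iff.mp h
      have h2 : (n + 1) / 2 = n / 2 + 1 := by omega
      rw [if_pos h, h2]
      push_cast
      ring
    · have h1 : n % 2 = 0 := Nat.even_iff.mp (Nat.not_odd_iff_even.mp h)
      have h2 : (n + 1) / 2 = n / 2 := by omega
      rw [if_neg h, h2, add_zero]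

/-- For the noiseless two-system instance `x¹_{t+1} = u¹_t`,
`x²_{t+1} = a·x²_t`, `x¹_0 = x²_0 = 1`, with agent 1's open-loop controls `u1`
independent of the parameter `a` and agent 2's controls possibly depending on `a`,
the worst-case cumulative cost over `a ∈ (-1,1)` is at least `(T-1)/4`:
every upper bound `c` of the costs over `a ∈ (-1,1)` satisfies `(T-1)/4 ≤ c`. -/
theorem stmt_0 (T : ℕ) (hT : 1 ≤ T)
    (u1 : ℕ → ℝ) (u2 : ℝ → ℕ → ℝ)
    (x1 : ℕ → ℝ) (x2 : ℝ → ℕ → ℝ)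
    (hx10 : x1 0 = 1) (hx20 : ∀ a, x2 a 0 = 1)
    (hx1 : ∀ t, x1 (t + 1) = u1 t)
    (hx2 : ∀ a t, x2 a (t + 1) = a * x2 a t)
    (c : ℝ)
    (hc : ∀ a ∈ Set.Ioo (-1 : ℝ) 1,
      (∑ t ∈ Finset.range T,
        ((x1 t - x2 a t) ^ 2 + (u1 t - (1 / 2) * u2 a t) ^ 2)) ≤ c) :
    ((T : ℝ) - 1) / 4 ≤ c := by
  -- states of agent 2 are powers of the parameter
  have hx2p : ∀ a t, x2 a t = a ^ t := by
    intro a t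
    induction t with
    | zero => simpa using hx20 a
    | succ t ih => rw [hx2 a t, ih]; ring
  -- choose the parameter a = (1/2)^(1/(2T))
  set a : ℝ := (1/2 : ℝ) ^ ((1 : ℝ) / (2 * T)) with ha_def
  have hTpos : (0 : ℝ) < (T : ℝ) := by exact_mod_cast hT
  have hexp : (0 : ℝ) < (1 : ℝ) / (2 * T) := by positivity
  have ha0 : 0 < a := Real.rpow_pos_of_pos (by norm_num) _
  have ha1 : a < 1 := Real.rpow_lt_one (by norm_num) (by norm_num) hexp
  have hkey : a ^ (2 * T) = 1 / 2 := by
    rw [ha_def, ← Real.rpow_natCast ((1/2 : ℝ) ^ ((1 : ℝ) / (2 * T))) (2 * T),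
      ← Real.rpow_mul (by norm_num : (0:ℝ) ≤ 1/2)]
    have : (1 : ℝ) / (2 * T) * ((2 * T : ℕ) : ℝ) = 1 := by
      push_cast
      field_simp
    rw [this, Real.rpow_one]
  have hhalf : ∀ t, t < T → (1 : ℝ) / 2 ≤ a ^ (2 * t) := by
    intro t ht
    rw [← hkey]
    exact pow_le_pow_of_le_one ha0.le ha1.le (by omega)
  have hmemA : a ∈ Set.Ioo (-1 : ℝ) 1 := ⟨by linarith, ha1⟩
  have hmemB : -a ∈ Set.Ioo (-1 : ℝ) 1 := ⟨by linarith, by linarith⟩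
  have hA := hc a hmemA
  have hB := hc (-a) hmemB
  -- lower bound the sum of the two costs
  have hsum : ((T / 2 : ℕ) : ℝ) ≤
      (∑ t ∈ Finset.range T,
        ((x1 t - x2 a t) ^ 2 + (u1 t - (1 / 2) * u2 a t) ^ 2)) +
      (∑ t ∈ Finset.range T,
        ((x1 t - x2 (-a) t) ^ 2 + (u1 t - (1 / 2) * u2 (-a) t) ^ 2)) := by
    rw [← Finset.sum_add_distrib, ← count_odd_range T]
    apply Finset.sum_le_sum
    intro t ht
    rw [Finset.mem_range] at ht
    rw [hx2p, hx2p]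
    by_cases h : Odd t
    · rw [if_pos h]
      have hq : (-a) ^ t = -(a ^ t) := h.neg_pow a
      rw [hq]
      have h1 := hhalf t ht
      have h2 : a ^ (2 * t) = (a ^ t) ^ 2 := by rw [← pow_mul]; ring_nf
      nlinarith [sq_nonneg (x1 t), sq_nonneg (u1 t - (1 / 2) * u2 a t),
        sq_nonneg (u1 t - (1 / 2) * u2 (-a) t)]
    · rw [if_neg h]
      positivity
  -- conclude
  have hnat : (T : ℝ) - 1 ≤ 2 * ((T / 2 : ℕ) : ℝ) := by
    have h1 : T - 1 ≤ 2 * (T / 2) := by omega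
    have h2 := (Nat.cast_le (α := ℝ)).mpr h1
    push_cast [Nat.cast_sub hT] at h2
    linarith
  linarith
end

section
/- Let T ≥ 1 be an integer. For every sequence u : ℕ → ℝ, sup_{a ∈ (-1,1)} Σ_{t=1}^{T-1} (u(t-1) − a^t)² ≥ (T−1)/4. -/
/-- For `T ≥ 1` and any sequence `u : ℕ → ℝ`,
`sup_{a ∈ (-1,1)} Σ_{t=1}^{T-1} (u(t-1) − a^t)² ≥ (T−1)/4`, expressed as:
every upper bound `c` of the sums over `a ∈ (-1,1)` satisfies `(T-1)/4 ≤ c`. -/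
theorem stmt_2 (T : ℕ) (hT : 1 ≤ T) (u : ℕ → ℝ) (c : ℝ)
    (hc : ∀ a ∈ Set.Ioo (-1 : ℝ) 1,
      (∑ t ∈ Finset.Icc 1 (T - 1), (u (t - 1) - a ^ t) ^ 2) ≤ c) :
    ((T : ℝ) - 1) / 4 ≤ c := by
  -- step 1: pointwise bound on Σ a^(2t) for a ∈ Ioo 0 1
  have h0 : (∑ t ∈ Finset.Icc 1 (T - 1), (u (t - 1)) ^ 2) ≤ c := by
    have h := hc 0 ⟨by norm_num, by norm_num⟩
    refine le_trans (le_of_eq ?_) h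
    refine Finset.sum_congr rfl fun t ht => ?_
    have ht1 : t ≠ 0 := by
      have := (Finset.mem_Icc.mp ht).1; omega
    rw [zero_pow ht1]; ring
  have key : ∀ a ∈ Set.Ioo (0 : ℝ) 1,
      (∑ t ∈ Finset.Icc 1 (T - 1), a ^ (2 * t)) ≤ 4 * c := by
    intro a ha
    have ha' : a ∈ Set.Ioo (-1 : ℝ) 1 := ⟨by linarith [ha.1], ha.2⟩
    have h1 := hc a ha'
    have hb : ∀ t ∈ Finset.Icc 1 (T - 1),
        a ^ (2 * t) ≤ 2 * (u (t - 1)) ^ 2 + 2 * (u (t - 1) - a ^ t) ^ 2 := by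
      intro t _
      have : a ^ (2 * t) = (a ^ t) ^ 2 := by rw [mul_comm, pow_mul]
      rw [this]
      nlinarith [sq_nonneg (2 * u (t - 1) - a ^ t)]
    calc (∑ t ∈ Finset.Icc 1 (T - 1), a ^ (2 * t))
        ≤ ∑ t ∈ Finset.Icc 1 (T - 1),
            (2 * (u (t - 1)) ^ 2 + 2 * (u (t - 1) - a ^ t) ^ 2) :=
          Finset.sum_le_sum hb
      _ = 2 * (∑ t ∈ Finset.Icc 1 (T - 1), (u (t - 1)) ^ 2)
            + 2 * (∑ t ∈ Finset.Icc 1 (T - 1), (u (t - 1) - a ^ t) ^ 2) := by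
          rw [Finset.sum_add_distrib, Finset.mul_sum, Finset.mul_sum]
      _ ≤ 4 * c := by linarith
  -- step 2: take the limit a → 1⁻
  have hne : (nhdsWithin (1 : ℝ) (Set.Ioo 0 1)).NeBot :=
    right_nhdsWithin_Ioo_neBot (by norm_num)
  have hcont : Filter.Tendsto (fun a : ℝ => ∑ t ∈ Finset.Icc 1 (T - 1), a ^ (2 * t))
      (nhdsWithin (1 : ℝ) (Set.Ioo 0 1)) (nhds ((T : ℝ) - 1)) := by
    have hc' : Continuous (fun a : ℝ => ∑ t ∈ Finset.Icc 1 (T - 1), a ^ (2 * t)) := by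
      exact continuous_finset_sum _ fun t _ => continuous_pow _
    have := (hc'.tendsto 1).mono_left (nhdsWithin_le_nhds (s := Set.Ioo 0 1))
    have hval : (∑ t ∈ Finset.Icc 1 (T - 1), (1 : ℝ) ^ (2 * t)) = (T : ℝ) - 1 := by
      simp [Nat.card_Icc]
      have : ((T - 1 : ℕ) : ℝ) = (T : ℝ) - 1 := by
        have := Nat.cast_sub hT (R := ℝ)
        simpa using this
      simpa using this
    rwa [hval] at this
  have hlim : (T : ℝ) - 1 ≤ 4 * c := by
    refine le_of_tendsto hcont ?_
    filter_upwards [self_mem_nhdsWithin] with a ha using key a ha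
  linarith
end

section
/- Let C be a real n×n matrix, D a real n×n symmetric positive semi-definite matrix, and S a real n×n matrix with SᵀS = D. Fix T ≥ 1 and let L be the (nT)×(nT) block matrix whose (t,s) block (t,s ∈ {0,…,T−1}, each block n×n) equals S·C^{t−s} if t ≥ s and 0 otherwise. For any vectors v_0,…,v_{T−1} ∈ ℝⁿ define s_t = Σ_{i=0}^{t−1} C^{t−1−i} v_i (so s_0 = 0) and Σ_t = Σ_{i=0}^{t−1} C^i (Cᵀ)^i, and let v̄ ∈ ℝ^{nT} be the stacked vector (v_0,…,v_{T−1}). Then Σ_{t=1}^{T} [ s_tᵀ D s_t − tr(D Σ_t) ] = v̄ᵀ LᵀL v̄ − tr(LᵀL); in particular Σ_{t=1}^{T} s_tᵀ D s_t = ‖L v̄‖² and tr(LᵀL) = Σ_{j=0}^{T−1} Σ_{i=0}^{j} tr((C^i)ᵀ D C^i). -/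
open Matrix

private lemma mulVec_sum' {n : ℕ} (A : Matrix (Fin n) (Fin n) ℝ) (s : Finset ℕ)
    (f : ℕ → Fin n → ℝ) : A.mulVec (∑ i ∈ s, f i) = ∑ i ∈ s, A.mulVec (f i) := by
  ext j; simp [Matrix.mulVec, dotProduct, Finset.mul_sum, Finset.sum_apply]
  rw [Finset.sum_comm]

private lemma trace_transpose_mul_self' {m : Type*} [Fintype m] [DecidableEq m]
    (M : Matrix m m ℝ) : (Mᵀ * M).trace = ∑ q, ∑ p, (M p q) ^ 2 := by
  simp [Matrix.trace, Matrix.diag, Matrix.mul_apply, sq]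

/-- Let `SᵀS = D` with `D` symmetric PSD, and let `L` be the block
lower-triangular Toeplitz matrix with `(t,s)` block `S·C^{t−s}` for `t ≥ s` and `0`
otherwise. With `s_t = Σ_{i<t} C^{t−1−i} v_i`, `Σ_t = Σ_{i<t} C^i (Cᵀ)^i` and `v̄` the
stacked noise vector, one has
`Σ_{t=1}^{T} [s_tᵀ D s_t − tr(D Σ_t)] = v̄ᵀ LᵀL v̄ − tr(LᵀL)`; in particular
`Σ_{t=1}^{T} s_tᵀ D s_t = ‖L v̄‖²` and
`tr(LᵀL) = Σ_{j=0}^{T−1} Σ_{i=0}^{j} tr((C^i)ᵀ D C^i)`. -/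
theorem stmt_9 {n T : ℕ} (hT : 1 ≤ T)
    (C D S : Matrix (Fin n) (Fin n) ℝ) (hD : D.PosSemidef) (hSD : Sᵀ * S = D)
    (L : Matrix (Fin T × Fin n) (Fin T × Fin n) ℝ)
    (hL : ∀ p q : Fin T × Fin n,
      L p q = if (q.1 : ℕ) ≤ (p.1 : ℕ)
        then (S * C ^ ((p.1 : ℕ) - (q.1 : ℕ))) p.2 q.2 else 0)
    (v : ℕ → Fin n → ℝ)
    (s : ℕ → Fin n → ℝ)
    (hs : ∀ t, s t = ∑ i ∈ Finset.range t, (C ^ (t - 1 - i)).mulVec (v i))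
    (Sig : ℕ → Matrix (Fin n) (Fin n) ℝ)
    (hSig : ∀ t, Sig t = ∑ i ∈ Finset.range t, C ^ i * (Cᵀ) ^ i)
    (vbar : Fin T × Fin n → ℝ) (hvbar : ∀ p, vbar p = v (p.1 : ℕ) p.2) :
    ((∑ t ∈ Finset.Icc 1 T, (s t ⬝ᵥ D.mulVec (s t) - (D * Sig t).trace))
        = vbar ⬝ᵥ (Lᵀ * L).mulVec vbar - (Lᵀ * L).trace)
    ∧ ((∑ t ∈ Finset.Icc 1 T, s t ⬝ᵥ D.mulVec (s t)) = ∑ p, (L.mulVec vbar p) ^ 2)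
    ∧ ((Lᵀ * L).trace
        = ∑ j ∈ Finset.range T, ∑ i ∈ Finset.range (j + 1),
            ((C ^ i)ᵀ * D * C ^ i).trace) := by
  -- filter lemma
  have hfilter : ∀ t : Fin T,
      Finset.filter (fun i => i ≤ (t : ℕ)) (Finset.range T) = Finset.range ((t : ℕ) + 1) := by
    intro t; ext i; simp only [Finset.mem_filter, Finset.mem_range, Nat.lt_succ_iff]
    constructor
    · rintro ⟨_, h⟩; exact h
    · intro h; exact ⟨lt_of_le_of_lt h t.2, h⟩
  -- s (t+1) in convenient form
  have hs' : ∀ t : Fin T, s ((t : ℕ) + 1)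
      = ∑ i ∈ Finset.range ((t : ℕ) + 1), (C ^ ((t : ℕ) - i)).mulVec (v i) := by
    intro t; rw [hs]
    refine Finset.sum_congr rfl fun i _ => ?_
    congr 2
  -- the key identity: (L v̄) at block t equals S s_{t+1}
  have hLv : ∀ p : Fin T × Fin n, L.mulVec vbar p = S.mulVec (s ((p.1 : ℕ) + 1)) p.2 := by
    rintro ⟨t, j⟩
    have : S.mulVec (s ((t : ℕ) + 1)) j
        = ∑ i ∈ Finset.range ((t : ℕ) + 1), ((S * C ^ ((t : ℕ) - i)).mulVec (v i)) j := by
      rw [hs' t, mulVec_sum']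
      simp [Matrix.mulVec_mulVec]
    rw [this]
    calc (L.mulVec vbar) (t, j)
        = ∑ s' : Fin T, ∑ k : Fin n,
            (if (s' : ℕ) ≤ (t : ℕ) then (S * C ^ ((t : ℕ) - (s' : ℕ))) j k else 0)
              * v (s' : ℕ) k := by
          simp [Matrix.mulVec, dotProduct, Fintype.sum_prod_type, hL, hvbar]
      _ = ∑ s' : Fin T, (if (s' : ℕ) ≤ (t : ℕ)
              then ((S * C ^ ((t : ℕ) - (s' : ℕ))).mulVec (v (s' : ℕ))) j else 0) := by
          refine Finset.sum_congr rfl fun s' _ => ?_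
          split <;> simp [Matrix.mulVec, dotProduct]
      _ = ∑ i ∈ Finset.range T, (if i ≤ (t : ℕ)
              then ((S * C ^ ((t : ℕ) - i)).mulVec (v i)) j else 0) := by
          rw [Finset.sum_range fun i => _]
      _ = ∑ i ∈ Finset.range ((t : ℕ) + 1), ((S * C ^ ((t : ℕ) - i)).mulVec (v i)) j := by
          rw [← Finset.sum_filter, hfilter t]
  -- quadratic form via S
  have hquad : ∀ w : Fin n → ℝ, w ⬝ᵥ D.mulVec w = ∑ j, (S.mulVec w j) ^ 2 := by
    intro w
    rw [← hSD, ← Matrix.mulVec_mulVec, Matrix.dotProduct_mulVec, Matrix.vecMul_transpose]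
    simp [dotProduct, sq]
  -- sum over Icc as sum over range
  have hIcc : ∀ f : ℕ → ℝ, ∑ i ∈ Finset.Icc 1 T, f i = ∑ i ∈ Finset.range T, f (1 + i) := by
    intro f; rw [← Finset.Ico_add_one_right_eq_Icc, Finset.sum_Ico_eq_sum_range]; simp
  -- claim 2
  have claim2 : (∑ t ∈ Finset.Icc 1 T, s t ⬝ᵥ D.mulVec (s t)) = ∑ p, (L.mulVec vbar p) ^ 2 := by
    rw [hIcc, Finset.sum_range fun i => _, Fintype.sum_prod_type]
    refine Finset.sum_congr rfl fun t _ => ?_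
    rw [show (1 : ℕ) + (t : ℕ) = (t : ℕ) + 1 from by omega, hquad]
    exact Finset.sum_congr rfl fun j _ => by rw [hLv (t, j)]
  -- trace of blocks
  have htr : ∀ i : ℕ, ((C ^ i)ᵀ * D * C ^ i).trace = ∑ k, ∑ j, ((S * C ^ i) j k) ^ 2 := by
    intro i
    have h1 : (C ^ i)ᵀ * D * C ^ i = (S * C ^ i)ᵀ * (S * C ^ i) := by
      rw [← hSD, Matrix.transpose_mul]
      noncomm_ring
    rw [h1, trace_transpose_mul_self']
  -- block sums of L
  have hblk : ∀ t s' : Fin T, (∑ k, ∑ j, (L (t, j) (s', k)) ^ 2)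
      = (if (s' : ℕ) ≤ (t : ℕ)
          then ∑ k, ∑ j, ((S * C ^ ((t : ℕ) - (s' : ℕ))) j k) ^ 2 else 0) := by
    intro t s'
    by_cases h : (s' : ℕ) ≤ (t : ℕ)
    · simp only [hL, h, if_true]
    · simp [hL, h]
  -- claim 3
  have claim3 : (Lᵀ * L).trace
      = ∑ j ∈ Finset.range T, ∑ i ∈ Finset.range (j + 1), ((C ^ i)ᵀ * D * C ^ i).trace := by
    have h0 : (Lᵀ * L).trace = ∑ t : Fin T, ∑ s' : Fin T,
        (if (s' : ℕ) ≤ (t : ℕ)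
          then ∑ k, ∑ j, ((S * C ^ ((t : ℕ) - (s' : ℕ))) j k) ^ 2 else 0) := by
      calc (Lᵀ * L).trace = ∑ q, ∑ p, (L p q) ^ 2 := trace_transpose_mul_self' L
        _ = ∑ s' : Fin T, ∑ k : Fin n, ∑ t : Fin T, ∑ j : Fin n, (L (t, j) (s', k)) ^ 2 := by
            rw [Fintype.sum_prod_type]
            exact Finset.sum_congr rfl fun s' _ => Finset.sum_congr rfl fun k _ =>
              Fintype.sum_prod_type ..
        _ = ∑ s' : Fin T, ∑ t : Fin T, ∑ k : Fin n, ∑ j : Fin n, (L (t, j) (s', k)) ^ 2 :=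
            Finset.sum_congr rfl fun s' _ => Finset.sum_comm
        _ = ∑ t : Fin T, ∑ s' : Fin T, ∑ k : Fin n, ∑ j : Fin n, (L (t, j) (s', k)) ^ 2 :=
            Finset.sum_comm
        _ = _ := Finset.sum_congr rfl fun t _ => Finset.sum_congr rfl fun s' _ => hblk t s'
    rw [h0, Finset.sum_range fun j => _]
    refine Finset.sum_congr rfl fun t _ => ?_
    calc ∑ s' : Fin T, (if (s' : ℕ) ≤ (t : ℕ)
            then ∑ k, ∑ j, ((S * C ^ ((t : ℕ) - (s' : ℕ))) j k) ^ 2 else 0)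
        = ∑ i ∈ Finset.range T, (if i ≤ (t : ℕ)
            then ∑ k, ∑ j, ((S * C ^ ((t : ℕ) - i)) j k) ^ 2 else 0) := by
          rw [Finset.sum_range fun i => _]
      _ = ∑ i ∈ Finset.range ((t : ℕ) + 1), ∑ k, ∑ j, ((S * C ^ ((t : ℕ) - i)) j k) ^ 2 := by
          rw [← Finset.sum_filter, hfilter t]
      _ = ∑ i ∈ Finset.range ((t : ℕ) + 1), ((C ^ i)ᵀ * D * C ^ i).trace := by
          conv_rhs => rw [← Finset.sum_range_reflect]
          refine Finset.sum_congr rfl fun i _ => ?_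
          rw [htr, show (t : ℕ) + 1 - 1 - i = (t : ℕ) - i from by omega]
  -- trace of D Σ_t
  have hDSig : ∀ t : ℕ, (D * Sig t).trace
      = ∑ i ∈ Finset.range t, ((C ^ i)ᵀ * D * C ^ i).trace := by
    intro t
    rw [hSig, Finset.mul_sum, Matrix.trace_sum]
    refine Finset.sum_congr rfl fun i _ => ?_
    rw [Matrix.transpose_pow, ← Matrix.mul_assoc, Matrix.trace_mul_comm, ← Matrix.mul_assoc]
  -- dot product identity
  have hdot : vbar ⬝ᵥ (Lᵀ * L).mulVec vbar = ∑ p, (L.mulVec vbar p) ^ 2 := by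
    rw [← Matrix.mulVec_mulVec, Matrix.dotProduct_mulVec, Matrix.vecMul_transpose]
    simp [dotProduct, sq]
  refine ⟨?_, claim2, claim3⟩
  rw [Finset.sum_sub_distrib, claim2, hdot, claim3]
  congr 1
  rw [hIcc]
  refine Finset.sum_congr rfl fun j _ => ?_
  rw [hDSig, Nat.add_comm 1 j]
end

section
/- Let C be a real n×n matrix, D a real n×n symmetric positive semi-definite matrix, and S a real n×n matrix with SᵀS = D. Fix T ≥ 1 and let L be the (nT)×(nT) block lower-triangular Toeplitz matrix whose (t,s) block equals S·C^{t−s} for t ≥ s and 0 otherwise. Then ‖L‖_∞ ≤ √n · Σ_{i=0}^{T−1} ‖S C^i‖_F = √n · Σ_{i=0}^{T−1} √(tr((C^i)ᵀ D C^i)), and the same bound holds for ‖L‖₁. -/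
open Matrix

/-- The maximum-row-sum matrix norm `‖M‖_∞`. -/
noncomputable def rowSumNorm {α β : Type*} [Fintype α] [Fintype β]
    (A : Matrix α β ℝ) : ℝ :=
  ⨆ i, ∑ j, |A i j|

/-- The maximum-column-sum matrix norm `‖M‖₁`. -/
noncomputable def colSumNorm {α β : Type*} [Fintype α] [Fintype β]
    (A : Matrix α β ℝ) : ℝ :=
  ⨆ j, ∑ i, |A i j|

/-- The Frobenius norm of a real matrix: `‖M‖_F = √tr(MᵀM)`. -/
noncomputable def frobeniusNorm {m n : ℕ} (A : Matrix (Fin m) (Fin n) ℝ) : ℝ :=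
  Real.sqrt (Aᵀ * A).trace

/-!
Row `(t, i)` of `L` is made of rows of the blocks `S C^(t-s)`, `s ≤ t`, whose exponents are
distinct and `< T`, so its absolute sum is at most `Σ_{k<T} ‖S C^k‖_∞`; dually for columns. Cauchy–Schwarz bounds the `ℓ¹` norm of
a row of an `n`-column matrix by `√n` times its `ℓ²` norm, hence by `√n ‖·‖_F`.
-/

open Finset

section RowColSumNorm

variable {α β : Type*} [Fintype α] [Fintype β]

lemma rowSumNorm_nonneg (A : Matrix α β ℝ) : 0 ≤ rowSumNorm A :=
  Real.iSup_nonneg fun _ => sum_nonneg fun _ _ => abs_nonneg _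

lemma sum_abs_row_le_rowSumNorm (A : Matrix α β ℝ) (i : α) :
    ∑ j, |A i j| ≤ rowSumNorm A :=
  le_ciSup (f := fun i => ∑ j, |A i j|) (Finite.bddAbove_range _) i

lemma colSumNorm_eq_rowSumNorm_transpose (A : Matrix α β ℝ) :
    colSumNorm A = rowSumNorm Aᵀ :=
  rfl

lemma colSumNorm_nonneg (A : Matrix α β ℝ) : 0 ≤ colSumNorm A :=
  rowSumNorm_nonneg Aᵀ

lemma sum_abs_col_le_colSumNorm (A : Matrix α β ℝ) (j : β) :
    ∑ i, |A i j| ≤ colSumNorm A :=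
  sum_abs_row_le_rowSumNorm Aᵀ j

end RowColSumNorm

section Frobenius

variable {m n : ℕ}

lemma trace_transpose_mul_self_eq_sum_sq (A : Matrix (Fin m) (Fin n) ℝ) :
    (Aᵀ * A).trace = ∑ j, ∑ i, A i j ^ 2 := by
  simp [Matrix.trace, Matrix.mul_apply, sq]

lemma frobeniusNorm_transpose (A : Matrix (Fin m) (Fin n) ℝ) :
    frobeniusNorm Aᵀ = frobeniusNorm A := by
  rw [frobeniusNorm, frobeniusNorm, transpose_transpose, trace_mul_comm]

lemma frobeniusNorm_mul (S : Matrix (Fin m) (Fin n) ℝ) (M : Matrix (Fin n) (Fin n) ℝ) :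
    frobeniusNorm (S * M) = Real.sqrt (Mᵀ * (Sᵀ * S) * M).trace := by
  rw [frobeniusNorm, transpose_mul, Matrix.mul_assoc, Matrix.mul_assoc, Matrix.mul_assoc]

lemma rowSumNorm_le_sqrt_mul_frobeniusNorm (A : Matrix (Fin m) (Fin n) ℝ) :
    rowSumNorm A ≤ Real.sqrt n * frobeniusNorm A := by
  refine Real.iSup_le (fun i => ?_)
    (mul_nonneg (Real.sqrt_nonneg _) (Real.sqrt_nonneg _))
  rw [frobeniusNorm, ← Real.sqrt_mul (Nat.cast_nonneg n)]
  apply Real.le_sqrt_of_sq_le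
  have hrow : ∑ j, A i j ^ 2 ≤ (Aᵀ * A).trace := by
    rw [trace_transpose_mul_self_eq_sum_sq]
    exact sum_le_sum fun j _ =>
      single_le_sum (f := fun k => A k j ^ 2) (fun _ _ => sq_nonneg _) (mem_univ i)
  calc (∑ j, |A i j|) ^ 2 ≤ (n : ℝ) * ∑ j, |A i j| ^ 2 := by
        simpa using sq_sum_le_card_mul_sum_sq (s := univ) (f := fun j => |A i j|)
    _ ≤ n * (Aᵀ * A).trace := by
        simp only [sq_abs]
        gcongr

lemma colSumNorm_le_sqrt_mul_frobeniusNorm (A : Matrix (Fin m) (Fin n) ℝ) :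
    colSumNorm A ≤ Real.sqrt m * frobeniusNorm A := by
  rw [colSumNorm_eq_rowSumNorm_transpose, ← frobeniusNorm_transpose]
  exact rowSumNorm_le_sqrt_mul_frobeniusNorm Aᵀ

end Frobenius

lemma sum_comp_le_sum_range_of_injOn {ι : Type*} {s : Finset ι} {e : ι → ℕ} {g : ℕ → ℝ}
    {T : ℕ} (hg : ∀ k, 0 ≤ g k) (he : Set.InjOn e s) (heT : ∀ i ∈ s, e i < T) :
    ∑ i ∈ s, g (e i) ≤ ∑ k ∈ range T, g k := by
  classical
  rw [← sum_image he]
  refine sum_le_sum_of_subset_of_nonneg (fun k hk => ?_) fun k _ _ => hg k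
  obtain ⟨i, hi, rfl⟩ := mem_image.mp hk
  exact mem_range.mpr (heT i hi)

def blockToeplitz {T : ℕ} {ι κ : Type*} (B : ℕ → Matrix ι κ ℝ) :
    Matrix (Fin T × ι) (Fin T × κ) ℝ :=
  Matrix.of fun p q => if (q.1 : ℕ) ≤ p.1 then B (p.1 - q.1) p.2 q.2 else 0

section BlockToeplitz

variable {T : ℕ} {ι κ : Type*} [Fintype ι] [Fintype κ] (B : ℕ → Matrix ι κ ℝ)

lemma rowSumNorm_blockToeplitz_le :
    rowSumNorm (blockToeplitz (T := T) B) ≤ ∑ k ∈ range T, rowSumNorm (B k) := by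
  refine Real.iSup_le (fun p => ?_) (sum_nonneg fun k _ => rowSumNorm_nonneg _)
  calc ∑ q, |blockToeplitz B p q|
      = ∑ s : Fin T, if (s : ℕ) ≤ p.1 then ∑ j, |B (p.1 - s) p.2 j| else 0 := by
        rw [Fintype.sum_prod_type]
        refine sum_congr rfl fun s _ => ?_
        split_ifs with hs
        · simp only [blockToeplitz, of_apply, if_pos hs]
        · simp only [blockToeplitz, of_apply, if_neg hs, abs_zero, sum_const_zero]
    _ ≤ ∑ s : Fin T, if (s : ℕ) ≤ p.1 then rowSumNorm (B (p.1 - s)) else 0 := by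
        gcongr with s
        split_ifs
        exacts [sum_abs_row_le_rowSumNorm _ _, le_rfl]
    _ ≤ ∑ k ∈ range T, rowSumNorm (B k) := by
        rw [← sum_filter]
        refine sum_comp_le_sum_range_of_injOn (fun k => rowSumNorm_nonneg _) ?_ ?_
        · intro s hs t ht hst
          simp only [coe_filter, mem_univ, true_and, Set.mem_ofPred_eq] at hs ht hst
          exact Fin.ext (by omega)
        · intro s _
          omega

lemma colSumNorm_blockToeplitz_le :
    colSumNorm (blockToeplitz (T := T) B) ≤ ∑ k ∈ range T, colSumNorm (B k) := by
  refine Real.iSup_le (fun q => ?_) (sum_nonneg fun k _ => colSumNorm_nonneg _)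
  calc ∑ p, |blockToeplitz B p q|
      = ∑ t : Fin T, if (q.1 : ℕ) ≤ t then ∑ i, |B (t - q.1) i q.2| else 0 := by
        rw [Fintype.sum_prod_type]
        refine sum_congr rfl fun t _ => ?_
        split_ifs with ht
        · simp only [blockToeplitz, of_apply, if_pos ht]
        · simp only [blockToeplitz, of_apply, if_neg ht, abs_zero, sum_const_zero]
    _ ≤ ∑ t : Fin T, if (q.1 : ℕ) ≤ t then colSumNorm (B (t - q.1)) else 0 := by
        gcongr with t
        split_ifs
        exacts [sum_abs_col_le_colSumNorm _ _, le_rfl]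
    _ ≤ ∑ k ∈ range T, colSumNorm (B k) := by
        rw [← sum_filter]
        refine sum_comp_le_sum_range_of_injOn (fun k => colSumNorm_nonneg _) ?_ ?_
        · intro s hs t ht hst
          simp only [coe_filter, mem_univ, true_and, Set.mem_ofPred_eq] at hs ht hst
          exact Fin.ext (by omega)
        · intro t _
          omega

end BlockToeplitz

theorem stmt_16_general {n T : ℕ}
    (C D S : Matrix (Fin n) (Fin n) ℝ) (hSD : Sᵀ * S = D)
    (L : Matrix (Fin T × Fin n) (Fin T × Fin n) ℝ)
    (hL : ∀ p q : Fin T × Fin n,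
      L p q = if (q.1 : ℕ) ≤ (p.1 : ℕ)
        then (S * C ^ ((p.1 : ℕ) - (q.1 : ℕ))) p.2 q.2 else 0) :
    rowSumNorm L ≤ Real.sqrt n * ∑ i ∈ Finset.range T, frobeniusNorm (S * C ^ i)
    ∧ (Real.sqrt n * ∑ i ∈ Finset.range T, frobeniusNorm (S * C ^ i)
        = Real.sqrt n * ∑ i ∈ Finset.range T,
            Real.sqrt ((C ^ i)ᵀ * D * C ^ i).trace)
    ∧ colSumNorm L ≤ Real.sqrt n * ∑ i ∈ Finset.range T, frobeniusNorm (S * C ^ i) := by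
  obtain rfl : L = blockToeplitz fun k => S * C ^ k := Matrix.ext hL
  refine ⟨?_, by simp_rw [frobeniusNorm_mul, hSD], ?_⟩
  · refine (rowSumNorm_blockToeplitz_le _).trans ?_
    rw [mul_sum]
    exact sum_le_sum fun k _ => rowSumNorm_le_sqrt_mul_frobeniusNorm _
  · refine (colSumNorm_blockToeplitz_le _).trans ?_
    rw [mul_sum]
    exact sum_le_sum fun k _ => colSumNorm_le_sqrt_mul_frobeniusNorm _

/-- For `SᵀS = D` with `D` symmetric PSD and the block lower-triangular
Toeplitz matrix `L` with `(t,s)` block `S·C^{t−s}` for `t ≥ s` and `0` otherwise,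
`‖L‖_∞ ≤ √n·Σ_{i=0}^{T−1}‖S C^i‖_F = √n·Σ_{i=0}^{T−1}√tr((C^i)ᵀ D C^i)`, and the same
bound holds for `‖L‖₁`. -/
theorem stmt_16 {n T : ℕ} (hT : 1 ≤ T)
    (C D S : Matrix (Fin n) (Fin n) ℝ) (hD : D.PosSemidef) (hSD : Sᵀ * S = D)
    (L : Matrix (Fin T × Fin n) (Fin T × Fin n) ℝ)
    (hL : ∀ p q : Fin T × Fin n,
      L p q = if (q.1 : ℕ) ≤ (p.1 : ℕ)
        then (S * C ^ ((p.1 : ℕ) - (q.1 : ℕ))) p.2 q.2 else 0) :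
    rowSumNorm L ≤ Real.sqrt n * ∑ i ∈ Finset.range T, frobeniusNorm (S * C ^ i)
    ∧ (Real.sqrt n * ∑ i ∈ Finset.range T, frobeniusNorm (S * C ^ i)
        = Real.sqrt n * ∑ i ∈ Finset.range T,
            Real.sqrt ((C ^ i)ᵀ * D * C ^ i).trace)
    ∧ colSumNorm L ≤ Real.sqrt n * ∑ i ∈ Finset.range T, frobeniusNorm (S * C ^ i) :=
  stmt_16_general C D S hSD L hL
end
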